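/- arXiv:2505.19323 — 2 statements merged into one kernel-verified Lean document; each statement's English description precedes it below -/
import Mathlib

section
/- Let T ≥ 0, ε > 0, and let φ : (−ε, T+ε) → ℝⁿ be real-analytic, and F ⊆ ℝⁿ a semi-algebraic set. Fix t ∈ [0,T). If for every δ ∈ (0, T−t] there exists τ ∈ (t, t+δ) with φ(τ) ∈ F, then there exists δ₀ > 0 such that φ(τ) ∈ F for all τ ∈ (t, t+δ₀). -/
/-!
Along an analytic curve `φ`, each polynomial `p ∘ φ` is analytic, so near `t` it either vanishes
identically or equals `(τ - t) ^ m * h τ` with `h t ≠ 0`; either way its sign is constant for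
`τ ∈ (t, t + δ)`. Membership in a semi-algebraic set is a finite boolean combination of such sign
conditions, so `φ τ ∈ F` is eventually true or eventually false as `τ ↓ t`, and hitting `F`
arbitrarily soon after `t` rules out the second alternative.
-/

/-- A set is semi-algebraic if it is a finite union of sets defined by finitely
many polynomial inequalities `p ≥ 0` and strict inequalities `q > 0`. -/
def IsSemialgebraic {n : ℕ} (F : Set (Fin n → ℝ)) : Prop :=
  ∃ (k : ℕ) (P Q : Fin k → Finset (MvPolynomial (Fin n) ℝ)),
    F = ⋃ i : Fin k,
      ({x | ∀ p ∈ P i, 0 ≤ MvPolynomial.eval x p} ∩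
       {x | ∀ q ∈ Q i, 0 < MvPolynomial.eval x q})

open Filter Topology Set

def Filter.EventuallyDecided {α : Type*} (l : Filter α) (p : α → Prop) : Prop :=
  (∀ᶠ x in l, p x) ∨ ∀ᶠ x in l, ¬p x

namespace Filter.EventuallyDecided

variable {α : Type*} {l : Filter α}

lemma of_eventually_eq_const {β : Type*} {f : α → β} {c : β} (hf : ∀ᶠ x in l, f x = c)
    (r : β → Prop) : EventuallyDecided l (fun x ↦ r (f x)) := by
  by_cases hc : r c
  · exact .inl (hf.mono fun x hx ↦ hx ▸ hc)
  · exact .inr (hf.mono fun x hx h ↦ hc (hx ▸ h))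

lemma and {p q : α → Prop} (hp : EventuallyDecided l p) (hq : EventuallyDecided l q) :
    EventuallyDecided l (fun x ↦ p x ∧ q x) := by
  rcases hp with hp | hp
  · rcases hq with hq | hq
    · exact .inl (hp.and hq)
    · exact .inr (hq.mono fun x hx h ↦ hx h.2)
  · exact .inr (hp.mono fun x hx h ↦ hx h.1)

lemma finset_forall {ι : Type*} (s : Finset ι) {p : ι → α → Prop}
    (hp : ∀ i ∈ s, EventuallyDecided l (p i)) :
    EventuallyDecided l (fun x ↦ ∀ i ∈ s, p i x) := by
  by_cases h : ∀ i ∈ s, ∀ᶠ x in l, p i x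
  · exact .inl ((eventually_all_finset s).2 h)
  · obtain ⟨i, hi, hpi⟩ := not_forall₂.1 h
    exact .inr (((hp i hi).resolve_left hpi).mono fun x hx h ↦ hx (h i hi))

lemma finite_exists {ι : Type*} [Finite ι] {p : ι → α → Prop}
    (hp : ∀ i, EventuallyDecided l (p i)) :
    EventuallyDecided l (fun x ↦ ∃ i, p i x) := by
  by_cases h : ∃ i, ∀ᶠ x in l, p i x
  · obtain ⟨i, hi⟩ := h
    exact .inl (hi.mono fun x hx ↦ ⟨i, hx⟩)
  · exact .inr ((eventually_all.2 fun i ↦ (hp i).resolve_left (not_exists.1 h i)).mono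
      fun x hx ⟨i, hi⟩ ↦ hx i hi)

lemma eventually_of_frequently {p : α → Prop} (hp : EventuallyDecided l p)
    (hfreq : ∃ᶠ x in l, p x) : ∀ᶠ x in l, p x :=
  hp.resolve_right hfreq

end Filter.EventuallyDecided

lemma AnalyticAt.exists_eventually_nhdsGT_sign_eq {g : ℝ → ℝ} {t : ℝ} (hg : AnalyticAt ℝ g t) :
    ∃ c : SignType, ∀ᶠ τ in 𝓝[>] t, SignType.sign (g τ) = c := by
  by_cases hzero : ∀ᶠ τ in 𝓝 t, g τ = 0
  · exact ⟨0, (hzero.filter_mono nhdsWithin_le_nhds).mono fun τ hτ ↦ by simp [hτ]⟩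
  obtain ⟨n, h, hh, hht, hgh⟩ := hg.exists_eventuallyEq_pow_smul_nonzero_iff.2 hzero
  have hsign_h : ∀ᶠ τ in 𝓝 t, SignType.sign (h τ) = SignType.sign (h t) :=
    ((continuousAt_sign_of_ne_zero hht).comp hh.continuousAt).eventually_mem
      ((isOpen_discrete {_}).mem_nhds rfl)
  refine ⟨SignType.sign (h t), ?_⟩
  filter_upwards [self_mem_nhdsWithin, nhdsWithin_le_nhds (hgh.and hsign_h)]
    with τ (hτ : t < τ) ⟨hgτ, hhτ⟩
  rw [hgτ, smul_eq_mul, sign_mul, sign_pow, sign_pos (sub_pos.2 hτ), one_pow, one_mul, hhτ]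

lemma nhdsGT_basis_Ioo_add {𝕜 : Type*} [Field 𝕜] [LinearOrder 𝕜] [IsStrictOrderedRing 𝕜]
    [TopologicalSpace 𝕜] [OrderTopology 𝕜] {a b : 𝕜} (hab : a < b) :
    (𝓝[>] a).HasBasis (· ∈ Ioc 0 (b - a)) (fun δ ↦ Ioo a (a + δ)) := by
  refine (nhdsGT_basis a).to_hasBasis (fun c hc ↦ ⟨min (c - a) (b - a), ⟨?_, min_le_right _ _⟩, ?_⟩)
    fun δ hδ ↦ ⟨a + δ, by linarith [hδ.1], subset_rfl⟩
  · exact lt_min (sub_pos.2 hc) (sub_pos.2 hab)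
  · exact Ioo_subset_Ioo_right (by linarith [min_le_left (c - a) (b - a)])

lemma AnalyticAt.eventuallyDecided_nhdsGT_sign {g : ℝ → ℝ} {t : ℝ} (hg : AnalyticAt ℝ g t)
    (r : SignType → Prop) : EventuallyDecided (𝓝[>] t) (fun τ ↦ r (SignType.sign (g τ))) :=
  let ⟨_, hc⟩ := hg.exists_eventually_nhdsGT_sign_eq
  .of_eventually_eq_const hc r

lemma IsSemialgebraic.eventuallyDecided_nhdsGT_mem {n : ℕ} {F : Set (Fin n → ℝ)}
    (hF : IsSemialgebraic F) {φ : ℝ → Fin n → ℝ} {t : ℝ} (hφ : AnalyticAt ℝ φ t) :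
    EventuallyDecided (𝓝[>] t) (fun τ ↦ φ τ ∈ F) := by
  obtain ⟨k, P, Q, rfl⟩ := hF
  have hpoly (p : MvPolynomial (Fin n) ℝ) : AnalyticAt ℝ (fun τ ↦ MvPolynomial.eval (φ τ) p) t :=
    AnalyticAt.aeval_mvPolynomial (analyticAt_pi_iff.1 hφ) p
  simp only [mem_iUnion, mem_inter_iff]
  refine .finite_exists fun i ↦ .and (.finset_forall _ fun p _ ↦ ?_) (.finset_forall _ fun q _ ↦ ?_)
  · simpa only [sign_nonneg_iff] using (hpoly p).eventuallyDecided_nhdsGT_sign (0 ≤ ·)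
  · simpa only [sign_eq_one_iff] using (hpoly q).eventuallyDecided_nhdsGT_sign (· = 1)

theorem analytic_flow_local_progress_general
    {n : ℕ} (T ε : ℝ) (hε : 0 < ε)
    (φ : ℝ → (Fin n → ℝ))
    (hφ : AnalyticOnNhd ℝ φ (Set.Ioo (-ε) (T + ε)))
    (F : Set (Fin n → ℝ)) (hF : IsSemialgebraic F)
    (t : ℝ) (ht : t ∈ Set.Ico 0 T)
    (hhit : ∀ δ ∈ Set.Ioc 0 (T - t), ∃ τ ∈ Set.Ioo t (t + δ), φ τ ∈ F) :
    ∃ δ₀ > 0, ∀ τ ∈ Set.Ioo t (t + δ₀), φ τ ∈ F := by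
  have hbasis := nhdsGT_basis_Ioo_add ht.2
  have hφt : AnalyticAt ℝ φ t := hφ t ⟨by linarith [ht.1], by linarith [ht.2]⟩
  have hfreq : ∃ᶠ τ in 𝓝[>] t, φ τ ∈ F := hbasis.frequently_iff.2 hhit
  obtain ⟨δ₀, hδ₀, hstay⟩ :=
    hbasis.eventually_iff.1 ((hF.eventuallyDecided_nhdsGT_mem hφt).eventually_of_frequently hfreq)
  exact ⟨δ₀, hδ₀.1, hstay⟩

/-- If a real-analytic flow hits a semi-algebraic set arbitrarily soon after
time `t`, then it stays in the set on some right-open interval after `t`. -/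
theorem analytic_flow_local_progress
    {n : ℕ} (T ε : ℝ) (hT : 0 ≤ T) (hε : 0 < ε)
    (φ : ℝ → (Fin n → ℝ))
    (hφ : AnalyticOnNhd ℝ φ (Set.Ioo (-ε) (T + ε)))
    (F : Set (Fin n → ℝ)) (hF : IsSemialgebraic F)
    (t : ℝ) (ht : t ∈ Set.Ico 0 T)
    (hhit : ∀ δ ∈ Set.Ioc 0 (T - t), ∃ τ ∈ Set.Ioo t (t + δ), φ τ ∈ F) :
    ∃ δ₀ > 0, ∀ τ ∈ Set.Ioo t (t + δ₀), φ τ ∈ F :=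
  analytic_flow_local_progress_general T ε hε φ hφ F hF t ht hhit
end

section
/- Let g : ℝ × ℝᵐ → ℝᵐ be real-analytic and let x : (−ε, T+ε) → ℝⁿ be real-analytic. Suppose y : [0, T_y) → ℝᵐ is the right-maximal solution of y'(t) = g(t, y(t)), y(0) = y₀, with T_y ≤ T, and suppose there is a continuous function h : [0,T] → ℝ with ‖y(t)‖² ≤ h(t) for all t ∈ [0, T_y). Then T_y = T, i.e., the solution extends to all of [0,T]. -/
/-!
On `[0, Ty)` the solution stays in a fixed ball `closedBall 0 r`, since `‖y‖²` is dominated by the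
continuous, hence bounded, `h` on the compact `[0, T]`. A `C¹` (in particular analytic) field
is Lipschitz and bounded on `[0, T + 1] × closedBall 0 (r + 1)`, so Picard–Lindelöf yields a
solution of fixed length `δ > 0` from every starting point in `[0, T] × closedBall 0 r`. Starting
it at `y t₀` for some `t₀ > Ty - δ` and gluing it to `y` (the two agree by uniqueness) continues
`y` beyond `Ty`, contradicting maximality unless `Ty = T`.
-/

open Set Metric

theorem exists_forall_norm_le_of_sq_norm_le {α E : Type*} [TopologicalSpace α]
    [SeminormedAddCommGroup E] {K s : Set α} {y : α → E} {h : α → ℝ}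
    (hK : IsCompact K) (hsK : s ⊆ K) (hh : ContinuousOn h K)
    (hy : ∀ t ∈ s, ‖y t‖ ^ 2 ≤ h t) :
    ∃ r, ∀ t ∈ s, ‖y t‖ ≤ r := by
  obtain ⟨M, hM⟩ := hK.bddAbove_image hh
  exact ⟨√M, fun t ht => Real.le_sqrt_of_sq_le <| (hy t ht).trans (hM ⟨t, hsK ht, rfl⟩)⟩

section

variable {E F : Type*} [NormedAddCommGroup E] [NormedSpace ℝ E]
  [NormedAddCommGroup F] [NormedSpace ℝ F]

theorem ContDiff.exists_forall_mem_Icc_lipschitzOnWith {g : ℝ × E → F} (hg : ContDiff ℝ 1 g)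
    (a b : ℝ) {s : Set E} (hs : Convex ℝ s) (hs' : IsCompact s) :
    ∃ K, ∀ t ∈ Icc a b, LipschitzOnWith K (fun x => g (t, x)) s := by
  obtain ⟨K, hK⟩ := hg.contDiffOn.exists_lipschitzOnWith one_ne_zero
    ((convex_Icc a b).prod hs) (isCompact_Icc.prod hs')
  refine ⟨K, fun t ht => ?_⟩
  exact mul_one K ▸ hK.comp (LipschitzWith.prodMk_left t).lipschitzOnWith
    fun x hx => (⟨ht, hx⟩ : (t, x) ∈ Icc a b ×ˢ s)

theorem hasDerivAt_ite_of_eqOn {g : ℝ × E → E} {y w : ℝ → E} {a t₀ τ t₁ : ℝ}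
    (hy : ∀ t ∈ Ico a τ, HasDerivAt y (g (t, y t)) t)
    (hw : ∀ t ∈ Ioo t₀ t₁, HasDerivAt w (g (t, w t)) t)
    (hwy : EqOn w y (Ico t₀ τ)) (ht₀ : t₀ < τ) :
    ∀ t ∈ Ico a t₁, HasDerivAt (fun s => if s < τ then y s else w s)
      (g (t, if t < τ then y t else w t)) t := by
  intro t ht
  by_cases htτ : t < τ
  · rw [if_pos htτ]
    refine (hy t ⟨ht.1, htτ⟩).congr_of_eventuallyEq ?_
    filter_upwards [Iio_mem_nhds htτ] with s hs using if_pos hs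
  · rw [if_neg htτ]
    have ht' : t ∈ Ioo t₀ t₁ := ⟨ht₀.trans_le (not_lt.1 htτ), ht.2⟩
    refine (hw t ht').congr_of_eventuallyEq ?_
    filter_upwards [Ioi_mem_nhds ht'.1] with s hs
    split_ifs with hsτ
    · exact (hwy ⟨hs.le, hsτ⟩).symm
    · rfl

variable [ProperSpace E]

theorem ContDiff.eqOn_Ico_of_hasDerivWithinAt {g : ℝ × E → E} (hg : ContDiff ℝ 1 g)
    {f₁ f₂ : ℝ → E} {a b : ℝ}
    (hf₁ : ∀ t ∈ Ico a b, HasDerivWithinAt f₁ (g (t, f₁ t)) (Ico a b) t)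
    (hf₂ : ∀ t ∈ Ico a b, HasDerivWithinAt f₂ (g (t, f₂ t)) (Ico a b) t)
    (ha : f₁ a = f₂ a) :
    EqOn f₁ f₂ (Ico a b) := by
  intro t ht
  have hsub : Icc a t ⊆ Ico a b := Icc_subset_Ico_right ht.2
  have hright : ∀ f : ℝ → E, (∀ s ∈ Ico a b, HasDerivWithinAt f (g (s, f s)) (Ico a b) s) →
      ∀ τ ∈ Ico a t, HasDerivWithinAt f (g (τ, f τ)) (Ici τ) τ := fun f hf τ hτ =>
    (hf τ (hsub (Ico_subset_Icc_self hτ))).mono_of_mem_nhdsWithin <|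
      Filter.mem_of_superset (Ico_mem_nhdsGE (hτ.2.trans ht.2)) (Ico_subset_Ico_left hτ.1)
  have hcont₁ : ContinuousOn f₁ (Icc a t) :=
    fun τ hτ => (hf₁ τ (hsub hτ)).continuousWithinAt.mono hsub
  have hcont₂ : ContinuousOn f₂ (Icc a t) :=
    fun τ hτ => (hf₂ τ (hsub hτ)).continuousWithinAt.mono hsub
  obtain ⟨R, hR⟩ := ((isCompact_Icc.image_of_continuousOn hcont₁).union
    (isCompact_Icc.image_of_continuousOn hcont₂)).isBounded.subset_closedBall 0
  obtain ⟨K, hK⟩ := hg.exists_forall_mem_Icc_lipschitzOnWith a t (convex_closedBall 0 R)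
    (isCompact_closedBall 0 R)
  refine ODE_solution_unique_of_mem_Icc_right (s := fun _ => closedBall 0 R)
    (fun τ hτ => hK τ (Ico_subset_Icc_self hτ)) hcont₁ (hright f₁ hf₁)
    (fun τ hτ => hR (.inl ⟨τ, Ico_subset_Icc_self hτ, rfl⟩)) hcont₂ (hright f₂ hf₂)
    (fun τ hτ => hR (.inr ⟨τ, Ico_subset_Icc_self hτ, rfl⟩)) ha ⟨ht.1, le_rfl⟩

theorem ContDiff.exists_pos_forall_exists_eq_forall_mem_Icc_hasDerivWithinAt {g : ℝ × E → E}
    (hg : ContDiff ℝ 1 g) (a b R : ℝ) :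
    ∃ δ > 0, ∀ t₀ ∈ Icc a b, ∀ x₀ ∈ closedBall (0 : E) R, ∃ f : ℝ → E, f t₀ = x₀ ∧
      ∀ t ∈ Icc t₀ (t₀ + δ), HasDerivWithinAt f (g (t, f t)) (Icc t₀ (t₀ + δ)) t := by
  obtain ⟨K, hK⟩ := hg.exists_forall_mem_Icc_lipschitzOnWith a (b + 1)
    (convex_closedBall 0 (R + 1)) (isCompact_closedBall 0 (R + 1))
  obtain ⟨C, hC⟩ := (isCompact_Icc.prod (isCompact_closedBall (0 : E) (R + 1)))
    |>.exists_bound_of_continuousOn hg.continuous.continuousOn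
  -- `δ ≤ 1` keeps the time interval in `[a, b + 1]`, and `C * δ ≤ 1` keeps the Picard iterates
  -- in `closedBall x₀ 1 ⊆ closedBall 0 (R + 1)`.
  set δ : ℝ := 1 / (C.toNNReal + 1)
  have hδ : 0 < δ := by positivity
  refine ⟨δ, hδ, fun t₀ ht₀ x₀ hx₀ => ?_⟩
  have hball : closedBall x₀ ((1 : NNReal) : ℝ) ⊆ closedBall 0 (R + 1) := by
    refine closedBall_subset_closedBall' ?_
    rw [NNReal.coe_one, dist_zero_right]
    linarith [mem_closedBall_zero_iff.1 hx₀]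
  have htime : Icc t₀ (t₀ + δ) ⊆ Icc a (b + 1) := by
    have : δ ≤ 1 := div_le_self zero_le_one (by simp)
    exact Icc_subset_Icc ht₀.1 (by linarith [ht₀.2])
  have hpl : IsPicardLindelof (fun t x => g (t, x))
      (⟨t₀, left_mem_Icc.2 (by linarith)⟩ : Icc t₀ (t₀ + δ)) x₀ 1 0 C.toNNReal K :=
    { lipschitzOnWith := fun t ht => (hK t (htime ht)).mono hball
      continuousOn := fun x _ => (hg.continuous.comp (Continuous.prodMk_left x)).continuousOn
      norm_le := fun t ht x hx =>
        (hC (t, x) ⟨htime ht, hball hx⟩).trans (Real.le_coe_toNNReal C)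
      mul_max_le := by
        change (C.toNNReal : ℝ) * max (t₀ + δ - t₀) (t₀ - t₀) ≤ 1 - 0
        rw [add_sub_cancel_left, sub_self, max_eq_left hδ.le, sub_zero, mul_one_div,
          div_le_one (by positivity)]
        exact (lt_add_one _).le }
  exact hpl.exists_eq_forall_mem_Icc_hasDerivWithinAt₀

theorem ContDiff.exists_extension_of_forall_norm_le {g : ℝ × E → E} (hg : ContDiff ℝ 1 g)
    {y : ℝ → E} {a τ r : ℝ} (haτ : a < τ)
    (hy : ∀ t ∈ Ico a τ, HasDerivAt y (g (t, y t)) t) (hr : ∀ t ∈ Ico a τ, ‖y t‖ ≤ r) :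
    ∃ τ' > τ, ∃ z : ℝ → E,
      (∀ t ∈ Ico a τ', HasDerivAt z (g (t, z t)) t) ∧ EqOn z y (Ico a τ) := by
  obtain ⟨δ, hδ, hsol⟩ := hg.exists_pos_forall_exists_eq_forall_mem_Icc_hasDerivWithinAt a τ r
  set t₀ := max a (τ - δ / 2)
  have ht₀ : t₀ ∈ Ico a τ := ⟨le_max_left _ _, max_lt haτ (by linarith)⟩
  have hτ : τ < t₀ + δ := by linarith [le_max_right a (τ - δ / 2)]
  obtain ⟨w, hw₀, hw⟩ := hsol t₀ (Ico_subset_Icc_self ht₀) (y t₀)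
    (mem_closedBall_zero_iff.2 (hr t₀ ht₀))
  have hwy : EqOn w y (Ico t₀ τ) := hg.eqOn_Ico_of_hasDerivWithinAt
    (fun t ht => (hw t ⟨ht.1, ht.2.le.trans hτ.le⟩).mono
      (Ico_subset_Icc_self.trans (Icc_subset_Icc_right hτ.le)))
    (fun t ht => (hy t ⟨ht₀.1.trans ht.1, ht.2⟩).hasDerivWithinAt) hw₀
  refine ⟨t₀ + δ, hτ, _, hasDerivAt_ite_of_eqOn hy (fun t ht => ?_) hwy ht₀.2,
    fun t ht => if_pos ht.2⟩
  exact (hw t (Ioo_subset_Icc_self ht)).hasDerivAt (Icc_mem_nhds ht.1 ht.2)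

end

theorem bounded_ghost_no_blowup_general
    {m : ℕ} (T Ty : ℝ) (hTy : 0 < Ty) (hle : Ty ≤ T)
    (g : ℝ × EuclideanSpace ℝ (Fin m) → EuclideanSpace ℝ (Fin m))
    (hg : AnalyticOnNhd ℝ g Set.univ)
    (y : ℝ → EuclideanSpace ℝ (Fin m))
    (hode : ∀ t ∈ Set.Ico 0 Ty, HasDerivAt y (g (t, y t)) t)
    (hmax : ∀ T' : ℝ, Ty < T' → T' ≤ T →
      ¬ ∃ z : ℝ → EuclideanSpace ℝ (Fin m),
          (∀ t ∈ Set.Ico 0 T', HasDerivAt z (g (t, z t)) t) ∧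
          (∀ t ∈ Set.Ico 0 Ty, z t = y t))
    (h : ℝ → ℝ) (hh : ContinuousOn h (Set.Icc 0 T))
    (hbound : ∀ t ∈ Set.Ico 0 Ty, ‖y t‖ ^ 2 ≤ h t) :
    Ty = T := by
  by_contra hne
  obtain ⟨r, hr⟩ := exists_forall_norm_le_of_sq_norm_le isCompact_Icc
    (Ico_subset_Icc_self.trans (Icc_subset_Icc_right hle)) hh hbound
  obtain ⟨τ, hτ, z, hz, hzy⟩ := hg.contDiff.exists_extension_of_forall_norm_le hTy hode hr
  exact hmax (min τ T) (lt_min hτ (hle.lt_of_ne hne)) (min_le_right _ _)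
    ⟨z, fun t ht => hz t ⟨ht.1, ht.2.trans_le (min_le_left _ _)⟩, hzy⟩

/-- Bounded Differential Ghost soundness core: a right-maximal solution of an
ODE with real-analytic right-hand side whose squared Euclidean norm is bounded
by a continuous function on `[0,T]` exists on the whole interval `[0,T]`. -/
theorem bounded_ghost_no_blowup
    {m : ℕ} (T Ty : ℝ) (hTy : 0 < Ty) (hle : Ty ≤ T)
    (g : ℝ × EuclideanSpace ℝ (Fin m) → EuclideanSpace ℝ (Fin m))
    (hg : AnalyticOnNhd ℝ g Set.univ)
    (y : ℝ → EuclideanSpace ℝ (Fin m)) (y₀ : EuclideanSpace ℝ (Fin m))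
    (hy0 : y 0 = y₀)
    (hode : ∀ t ∈ Set.Ico 0 Ty, HasDerivAt y (g (t, y t)) t)
    (hmax : ∀ T' : ℝ, Ty < T' → T' ≤ T →
      ¬ ∃ z : ℝ → EuclideanSpace ℝ (Fin m),
          (∀ t ∈ Set.Ico 0 T', HasDerivAt z (g (t, z t)) t) ∧
          (∀ t ∈ Set.Ico 0 Ty, z t = y t))
    (h : ℝ → ℝ) (hh : ContinuousOn h (Set.Icc 0 T))
    (hbound : ∀ t ∈ Set.Ico 0 Ty, ‖y t‖ ^ 2 ≤ h t) :
    Ty = T :=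
  bounded_ghost_no_blowup_general T Ty hTy hle g hg y hode hmax h hh hbound
end
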